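/- Let X₁, X₂, … be independent real-valued random variables with F_{X_ν} ∈ 𝒟 for some ν ≥ 1, and suppose limsup_{x→∞} sup_{n≥ν} (1/(n \bar F_{X_ν}(x))) Σ_{i=1}^n \bar F_{X_i}(x) < ∞. Then for each p > J⁺_{F_{X_ν}} there exists a constant c > 0 such that P(X₁+⋯+Xₙ > x) ≤ c n^{p+1} \bar F_{X_ν}(x) for all n ≥ ν and all x ≥ 0. -/

import Mathlib

open Filter MeasureTheory Topology

/-- The tail function of a real random variable: `x ↦ P(X > x)`. -/
noncomputable def tailDist {Ω : Type*} [MeasurableSpace Ω] (μ : Measure Ω)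
    (X : Ω → ℝ) : ℝ → ℝ :=
  fun x => (μ {ω | x < X ω}).toReal

/-- A tail function `T` is dominatedly varying:
for every `y ∈ (0,1)`, `limsup_{x→∞} T(xy)/T(x) < ∞`. -/
def DominatedlyVarying (T : ℝ → ℝ) : Prop :=
  ∀ y ∈ Set.Ioo (0:ℝ) 1, IsBoundedUnder (· ≤ ·) atTop (fun x => T (x * y) / T x)

/-- `J` is the (finite) upper Matuszewska index of the tail function `T`. -/
def IsUpperMatuszewskaIndex (T : ℝ → ℝ) (J : ℝ) : Prop :=
  Tendsto (fun y : ℝ =>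
      -(Real.log (Filter.liminf (fun x => T (x * y) / T x) atTop) / Real.log y))
    atTop (𝓝 J)

/-! A union bound reduces `P(X₁+⋯+Xₙ > x)` to `∑ᵢ P(Xᵢ > x/n)`, which the averaged domination
hypothesis bounds by a multiple of `n · T(x/n)`, `T` being the tail of `X_ν`. Dominated variation
together with `J⁺ < p` yields one `y₀ > 1` with `T(x y₀) ≥ y₀^{-p} T(x)` for large `x`; iterating
this step gives the Potter-type bound `T(x/y) ≤ C y^p T(x)` for all `y ≥ 1`, `x ≥ 0`. -/

lemma tailDist_le_one {Ω : Type*} [MeasurableSpace Ω] (μ : Measure Ω) [IsProbabilityMeasure μ]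
    (X : Ω → ℝ) (x : ℝ) : tailDist μ X x ≤ 1 :=
  measureReal_le_one

lemma tailDist_antitone {Ω : Type*} [MeasurableSpace Ω] (μ : Measure Ω) [IsFiniteMeasure μ]
    (X : Ω → ℝ) : Antitone (tailDist μ X) := fun _ _ hab =>
  measureReal_mono fun _ hω => lt_of_le_of_lt hab hω

lemma tailDist_sum_le_sum_tailDist_div_card {Ω ι : Type*} [MeasurableSpace Ω] (μ : Measure Ω)
    [IsFiniteMeasure μ] (X : ι → Ω → ℝ) {s : Finset ι} (hs : s.Nonempty) (x : ℝ) :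
    tailDist μ (fun ω => ∑ i ∈ s, X i ω) x ≤ ∑ i ∈ s, tailDist μ (X i) (x / s.card) := by
  have hsub : {ω | x < ∑ i ∈ s, X i ω} ⊆ ⋃ i ∈ s, {ω | x / s.card < X i ω} := by
    intro ω hω
    by_contra hnot
    have hsum : ∑ i ∈ s, X i ω ≤ x :=
      calc ∑ i ∈ s, X i ω ≤ ∑ _i ∈ s, x / s.card :=
          Finset.sum_le_sum fun i hi => not_lt.1 fun h => hnot (Set.mem_biUnion hi h)
        _ = x := by
          rw [Finset.sum_const, nsmul_eq_mul]
          field_simp [hs.card_pos.ne']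
    exact (not_lt.2 hsum) hω
  exact (measureReal_mono hsub (measure_ne_top μ _)).trans (measureReal_biUnion_finset_le _ _)

section TailRatio

variable {T : ℝ → ℝ}

lemma eventually_ratio_le_one (hT : Antitone T) (hnn : ∀ x, 0 ≤ T x) {y : ℝ} (hy : 1 ≤ y) :
    ∀ᶠ x in atTop, T (x * y) / T x ≤ 1 := by
  filter_upwards [eventually_ge_atTop 0] with x hx
  exact div_le_one_of_le₀ (hT (le_mul_of_one_le_right hx hy)) (hnn x)

lemma liminf_ratio_mem_Icc (hT : Antitone T) (hnn : ∀ x, 0 ≤ T x) {y : ℝ} (hy : 1 ≤ y) :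
    liminf (fun x => T (x * y) / T x) atTop ∈ Set.Icc 0 1 := by
  have hle := eventually_ratio_le_one hT hnn hy
  have hge : ∀ x, 0 ≤ T (x * y) / T x := fun x => div_nonneg (hnn _) (hnn _)
  exact ⟨le_liminf_of_le (isBoundedUnder_of_eventually_le hle).isCoboundedUnder_ge
      (Eventually.of_forall hge),
    liminf_le_of_frequently_le hle.frequently (isBoundedUnder_of_eventually_ge
      (Eventually.of_forall hge))⟩

lemma IsUpperMatuszewskaIndex.nonneg (hT : Antitone T) (hnn : ∀ x, 0 ≤ T x) {J : ℝ}
    (hJ : IsUpperMatuszewskaIndex T J) : 0 ≤ J := by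
  refine ge_of_tendsto hJ ?_
  filter_upwards [eventually_gt_atTop 1] with y hy
  obtain ⟨h0, h1⟩ := liminf_ratio_mem_Icc hT hnn hy.le
  have hlog := Real.log_nonpos h0 h1
  have := div_nonpos_of_nonpos_of_nonneg hlog (Real.log_pos hy).le
  linarith

lemma DominatedlyVarying.liminf_ratio_pos (hD : DominatedlyVarying T) (hT : Antitone T)
    (hpos : ∀ x, 0 < T x) {y : ℝ} (hy : 1 < y) :
    0 < liminf (fun x => T (x * y) / T x) atTop := by
  have hy0 : 0 < y := one_pos.trans hy
  obtain ⟨M, hM⟩ := hD y⁻¹ ⟨inv_pos.2 hy0, inv_lt_one_of_one_lt₀ hy⟩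
  have hM' : ∀ᶠ x in atTop, T x / T (x * y) ≤ M := by
    filter_upwards [(tendsto_id.atTop_mul_const hy0).eventually (eventually_map.1 hM)] with x hx
    rwa [id, mul_inv_cancel_right₀ hy0.ne'] at hx
  have hM1 : 0 < max M 1 := lt_max_of_lt_right one_pos
  refine (inv_pos.2 hM1).trans_le (le_liminf_of_le
    (isBoundedUnder_of_eventually_le (eventually_ratio_le_one hT (fun x => (hpos x).le)
      hy.le)).isCoboundedUnder_ge ?_)
  filter_upwards [hM'] with x hx
  rw [div_le_iff₀ (hpos _)] at hx
  rw [le_div_iff₀ (hpos x), inv_mul_le_iff₀ hM1]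
  exact hx.trans (mul_le_mul_of_nonneg_right (le_max_left _ _) (hpos _).le)

/-- Where `J⁺ < p` enters: `-log L(y₀) / log y₀ < p` says `L(y₀) > y₀^{-p}` for the liminf
`L(y₀)` of the ratio, once dominated variation guarantees `L(y₀) > 0`. -/
lemma IsUpperMatuszewskaIndex.exists_eventually_rpow_neg_mul_le (hT : Antitone T)
    (hpos : ∀ x, 0 < T x) (hD : DominatedlyVarying T) {J p : ℝ}
    (hJ : IsUpperMatuszewskaIndex T J) (hpJ : J < p) :
    ∃ y₀, 1 < y₀ ∧ ∀ᶠ x in atTop, y₀ ^ (-p) * T x ≤ T (x * y₀) := by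
  obtain ⟨y₀, hlt, hy₀⟩ := ((hJ.eventually_lt_const hpJ).and (eventually_gt_atTop 1)).exists
  have hy₀0 : 0 < y₀ := one_pos.trans hy₀
  have hL := hD.liminf_ratio_pos hT hpos hy₀
  have hlogL : Real.log (y₀ ^ (-p)) < Real.log (liminf (fun x => T (x * y₀) / T x) atTop) := by
    rw [← neg_div, div_lt_iff₀ (Real.log_pos hy₀)] at hlt
    rw [Real.log_rpow hy₀0]
    linarith
  have hbL := (Real.log_lt_log_iff (Real.rpow_pos_of_pos hy₀0 _) hL).1 hlogL
  refine ⟨y₀, hy₀, ?_⟩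
  filter_upwards [eventually_lt_of_lt_liminf hbL (isBoundedUnder_of_eventually_ge
    (Eventually.of_forall fun x => div_nonneg (hpos _).le (hpos _).le))] with x hx
  exact ((lt_div_iff₀ (hpos x)).1 hx).le

lemma pow_mul_le_apply_mul_pow {a b x₁ : ℝ} (ha : 1 ≤ a) (hb : 0 ≤ b) (hx₁ : 0 ≤ x₁)
    (hstep : ∀ x, x₁ ≤ x → b * T x ≤ T (x * a)) (k : ℕ) {x : ℝ} (hx : x₁ ≤ x) :
    b ^ k * T x ≤ T (x * a ^ k) := by
  induction k with
  | zero => simp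
  | succ k ih =>
    have hxk : x₁ ≤ x * a ^ k := hx.trans (le_mul_of_one_le_right (hx₁.trans hx) (one_le_pow₀ ha))
    calc b ^ (k + 1) * T x = b * (b ^ k * T x) := by ring
      _ ≤ b * T (x * a ^ k) := mul_le_mul_of_nonneg_left ih hb
      _ ≤ T (x * a ^ k * a) := hstep _ hxk
      _ = T (x * a ^ (k + 1)) := by rw [pow_succ, mul_assoc]

/-- Choosing `k` with `a^k ≤ y < a^(k+1)`, the `(k+1)`-fold step bound loses at most a factor
`a^{-p}` against `y^{-p}`. -/
lemma rpow_neg_mul_le_apply_mul (hT : Antitone T) (hnn : ∀ x, 0 ≤ T x) {a p x₁ : ℝ}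
    (ha : 1 < a) (hp : 0 ≤ p) (hx₁ : 0 ≤ x₁)
    (hstep : ∀ x, x₁ ≤ x → a ^ (-p) * T x ≤ T (x * a)) {y : ℝ} (hy : 1 ≤ y) {x : ℝ}
    (hx : x₁ ≤ x) : a ^ (-p) * y ^ (-p) * T x ≤ T (x * y) := by
  have ha0 : 0 < a := one_pos.trans ha
  obtain ⟨k, hk, hk'⟩ := exists_nat_pow_near hy ha
  have hak : a ^ (k + 1) ≤ a * y := by rw [pow_succ']; exact mul_le_mul_of_nonneg_left hk ha0.le
  calc a ^ (-p) * y ^ (-p) * T x = (a * y) ^ (-p) * T x := by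
        rw [Real.mul_rpow ha0.le (zero_le_one.trans hy)]
    _ ≤ (a ^ (k + 1)) ^ (-p) * T x := mul_le_mul_of_nonneg_right
        (Real.rpow_le_rpow_of_nonpos (pow_pos ha0 _) hak (neg_nonpos.2 hp)) (hnn x)
    _ = (a ^ (-p)) ^ (k + 1) * T x := by
        rw [← Real.rpow_natCast_mul ha0.le, ← Real.rpow_mul_natCast ha0.le, mul_comm (-p)]
    _ ≤ T (x * a ^ (k + 1)) := pow_mul_le_apply_mul_pow ha.le
        (Real.rpow_pos_of_pos ha0 _).le hx₁ hstep (k + 1) hx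
    _ ≤ T (x * y) := hT (mul_le_mul_of_nonneg_left hk'.le (hx₁.trans hx))

/-- Below the threshold `x₁` of the step bound, `T` is squeezed between `T x₁` and `T 0`, which
costs the constant factor `T x₁ / T 0`. -/
lemma exists_pos_mul_rpow_neg_mul_le_apply_mul (hT : Antitone T) (hpos : ∀ x, 0 < T x)
    (hD : DominatedlyVarying T) {J p : ℝ} (hJ : IsUpperMatuszewskaIndex T J) (hpJ : J < p) :
    ∃ c, 0 < c ∧ ∀ y, 1 ≤ y → ∀ x, 0 ≤ x → c * y ^ (-p) * T x ≤ T (x * y) := by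
  have hnn : ∀ x, 0 ≤ T x := fun x => (hpos x).le
  have hp : 0 ≤ p := (hJ.nonneg hT hnn).trans hpJ.le
  obtain ⟨a, ha, hstep⟩ := hJ.exists_eventually_rpow_neg_mul_le hT hpos hD hpJ
  obtain ⟨x₀, hx₀⟩ := eventually_atTop.1 hstep
  set x₁ := max x₀ (0 : ℝ)
  have hx₁ : 0 ≤ x₁ := le_max_right _ _
  have hstep₁ : ∀ x, x₁ ≤ x → a ^ (-p) * T x ≤ T (x * a) :=
    fun x hx => hx₀ x ((le_max_left _ _).trans hx)
  have ha0 : 0 < a ^ (-p) := Real.rpow_pos_of_pos (one_pos.trans ha) _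
  refine ⟨a ^ (-p) * (T x₁ / T 0), mul_pos ha0 (div_pos (hpos _) (hpos _)), fun y hy x hx => ?_⟩
  have hlow : T x₁ / T 0 * T x ≤ T (max x x₁) := by
    rw [show T (max x x₁) = min (T x) (T x₁) from hT.map_max]
    refine le_min ?_ ?_
    · exact mul_le_of_le_one_left (hnn x) (div_le_one_of_le₀ (hT hx₁) (hpos 0).le)
    · rw [div_mul_eq_mul_div, div_le_iff₀ (hpos 0)]
      exact mul_le_mul_of_nonneg_left (hT hx) (hnn _)
  have hyp : 0 ≤ y ^ (-p) := Real.rpow_nonneg (zero_le_one.trans hy) _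
  calc a ^ (-p) * (T x₁ / T 0) * y ^ (-p) * T x
      = a ^ (-p) * y ^ (-p) * (T x₁ / T 0 * T x) := by ring
    _ ≤ a ^ (-p) * y ^ (-p) * T (max x x₁) :=
        mul_le_mul_of_nonneg_left hlow (mul_nonneg ha0.le hyp)
    _ ≤ T (max x x₁ * y) :=
        rpow_neg_mul_le_apply_mul hT hnn ha hp hx₁ hstep₁ hy (le_max_right _ _)
    _ ≤ T (x * y) := hT (mul_le_mul_of_nonneg_right (le_max_left _ _) (zero_le_one.trans hy))

lemma exists_apply_div_le_mul_rpow_mul (hT : Antitone T) (hpos : ∀ x, 0 < T x)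
    (hD : DominatedlyVarying T) {J p : ℝ} (hJ : IsUpperMatuszewskaIndex T J) (hpJ : J < p) :
    ∃ C, 0 < C ∧ ∀ y, 1 ≤ y → ∀ x, 0 ≤ x → T (x / y) ≤ C * y ^ p * T x := by
  obtain ⟨c, hc, hbound⟩ := exists_pos_mul_rpow_neg_mul_le_apply_mul hT hpos hD hJ hpJ
  refine ⟨c⁻¹, inv_pos.2 hc, fun y hy x hx => ?_⟩
  have hy0 : 0 < y := one_pos.trans_le hy
  have hyp : 0 < y ^ p := Real.rpow_pos_of_pos hy0 p
  have h := hbound y hy (x / y) (div_nonneg hx hy0.le)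
  rw [div_mul_cancel₀ x hy0.ne', Real.rpow_neg hy0.le] at h
  calc T (x / y) = c⁻¹ * y ^ p * (c * (y ^ p)⁻¹ * T (x / y)) := by field_simp
    _ ≤ c⁻¹ * y ^ p * T x := mul_le_mul_of_nonneg_left h (by positivity)

end TailRatio

lemma exists_sum_tailDist_Icc_le {Ω : Type*} [MeasurableSpace Ω] (μ : Measure Ω)
    [IsProbabilityMeasure μ] (X : ℕ → Ω → ℝ) {T : ℝ → ℝ} (hT : Antitone T)
    (hpos : ∀ x, 0 < T x) {ν : ℕ}
    (hdom : ∃ C : ℝ, ∀ᶠ x in atTop, ∀ n, ν ≤ n →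
      (∑ i ∈ Finset.Icc 1 n, tailDist μ (X i) x) / (n * T x) ≤ C) :
    ∃ C, 0 < C ∧ ∀ n, ν ≤ n → ∀ x, ∑ i ∈ Finset.Icc 1 n, tailDist μ (X i) x ≤ C * (n * T x) := by
  obtain ⟨C, hC⟩ := hdom
  obtain ⟨x₀, hx₀⟩ := eventually_atTop.1 hC
  refine ⟨max C (T x₀)⁻¹, lt_max_of_lt_right (inv_pos.2 (hpos x₀)), fun n hn x => ?_⟩
  obtain rfl | hn0 := n.eq_zero_or_pos
  · simp
  have hnT : 0 < (n : ℝ) * T x := mul_pos (Nat.cast_pos.2 hn0) (hpos x)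
  rcases le_total x₀ x with hx | hx
  · calc _ ≤ C * (n * T x) := (div_le_iff₀ hnT).1 (hx₀ x hx n hn)
      _ ≤ _ := mul_le_mul_of_nonneg_right (le_max_left _ _) hnT.le
  · calc ∑ i ∈ Finset.Icc 1 n, tailDist μ (X i) x ≤ ∑ _i ∈ Finset.Icc 1 n, (1 : ℝ) :=
          Finset.sum_le_sum fun i _ => tailDist_le_one μ (X i) x
      _ = (T x₀)⁻¹ * (n * T x₀) := by field_simp [(hpos x₀).ne']; simp
      _ ≤ (T x₀)⁻¹ * (n * T x) := by gcongr; exacts [(inv_pos.2 (hpos x₀)).le, hT hx]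
      _ ≤ _ := mul_le_mul_of_nonneg_right (le_max_right _ _) hnT.le

theorem partial_sum_tail_upper_bound_general {Ω : Type*} [MeasurableSpace Ω]
    (μ : Measure Ω) [IsProbabilityMeasure μ]
    (X : ℕ → Ω → ℝ) (ν : ℕ) (hν : 1 ≤ ν)
    (hpos : ∀ x, 0 < tailDist μ (X ν) x)
    (hD : DominatedlyVarying (tailDist μ (X ν)))
    (hdom : ∃ C : ℝ, ∀ᶠ x in atTop, ∀ n, ν ≤ n →
      (∑ i ∈ Finset.Icc 1 n, tailDist μ (X i) x) / (n * tailDist μ (X ν) x) ≤ C)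
    (p J : ℝ) (hJ : IsUpperMatuszewskaIndex (tailDist μ (X ν)) J) (hpJ : J < p) :
    ∃ c : ℝ, 0 < c ∧ ∀ n, ν ≤ n → ∀ x : ℝ, 0 ≤ x →
      tailDist μ (fun ω => ∑ k ∈ Finset.Icc 1 n, X k ω) x ≤
        c * (n : ℝ) ^ (p + 1) * tailDist μ (X ν) x := by
  set T := tailDist μ (X ν)
  have hT : Antitone T := tailDist_antitone μ (X ν)
  obtain ⟨C₁, hC₁, hsum⟩ := exists_sum_tailDist_Icc_le μ X hT hpos hdom
  obtain ⟨C₂, hC₂, hpotter⟩ := exists_apply_div_le_mul_rpow_mul hT hpos hD hJ hpJ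
  refine ⟨C₁ * C₂, mul_pos hC₁ hC₂, fun n hn x hx => ?_⟩
  have hn1 : 1 ≤ n := hν.trans hn
  have hn0 : (0 : ℝ) < n := Nat.cast_pos.2 hn1
  have hunion := tailDist_sum_le_sum_tailDist_div_card μ X (Finset.nonempty_Icc.2 hn1) x
  rw [Nat.card_Icc, Nat.add_sub_cancel] at hunion
  calc tailDist μ (fun ω => ∑ k ∈ Finset.Icc 1 n, X k ω) x
      ≤ ∑ i ∈ Finset.Icc 1 n, tailDist μ (X i) (x / n) := hunion
    _ ≤ C₁ * (n * T (x / n)) := hsum n hn _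
    _ ≤ C₁ * (n * (C₂ * n ^ p * T x)) := by
        gcongr
        exact hpotter n (Nat.one_le_cast.2 hn1) x hx
    _ = C₁ * C₂ * n ^ (p + 1) * T x := by
        rw [Real.rpow_add_one hn0.ne']
        ring

/-- Lemma 5 of the paper: for independent r.v.s `X₁, X₂, …` with `F_{X_ν} ∈ 𝒟` and
tails uniformly dominated on average by the tail of `X_ν`, for each
`p > J⁺_{F_{X_ν}}` there is a constant `c > 0` with
`P(X₁+⋯+Xₙ > x) ≤ c n^{p+1} P(X_ν > x)` for all `n ≥ ν` and `x ≥ 0`. -/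
theorem partial_sum_tail_upper_bound {Ω : Type*} [MeasurableSpace Ω]
    (μ : Measure Ω) [IsProbabilityMeasure μ]
    (X : ℕ → Ω → ℝ) (ν : ℕ) (hν : 1 ≤ ν)
    (hmeas : ∀ k, Measurable (X k))
    (hindep : ProbabilityTheory.iIndepFun X μ)
    (hpos : ∀ x, 0 < tailDist μ (X ν) x)
    (hD : DominatedlyVarying (tailDist μ (X ν)))
    (hdom : ∃ C : ℝ, ∀ᶠ x in atTop, ∀ n, ν ≤ n →
      (∑ i ∈ Finset.Icc 1 n, tailDist μ (X i) x) / (n * tailDist μ (X ν) x) ≤ C)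
    (p J : ℝ) (hJ : IsUpperMatuszewskaIndex (tailDist μ (X ν)) J) (hpJ : J < p) :
    ∃ c : ℝ, 0 < c ∧ ∀ n, ν ≤ n → ∀ x : ℝ, 0 ≤ x →
      tailDist μ (fun ω => ∑ k ∈ Finset.Icc 1 n, X k ω) x ≤
        c * (n : ℝ) ^ (p + 1) * tailDist μ (X ν) x :=
  partial_sum_tail_upper_bound_general μ X ν hν hpos hD hdom p J hJ hpJ
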